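/- Let I : R → ℝ be a Daniell integral on a Riesz space R of functions on Z. Then there exists a unique Daniell integral Ī : L(R) → ℝ on the smallest Lebesgue lattice L(R) containing R such that Ī(f) = I(f) for all f ∈ R. -/

import Mathlib

open Filter Topology

/-- `Pdom M`: dominated pointwise limits of sequences in `M`
(sequence `f₀, f₁, …` with `|fₙ| ≤ f₀` for `n ≥ 1`, converging pointwise). -/
def Pdom {Z : Type*} (M : Set (Z → ℝ)) : Set (Z → ℝ) :=
  { f | ∃ F : ℕ → Z → ℝ, (∀ n, F n ∈ M) ∧ (∀ n, |F (n + 1)| ≤ F 0) ∧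
      ∀ z, Tendsto (fun n => F n z) atTop (𝓝 (f z)) }

/-- `U` is a vector subspace of the functions `Z → ℝ`. -/
def IsSubspace {Z : Type*} (U : Set (Z → ℝ)) : Prop :=
  (0 : Z → ℝ) ∈ U ∧ (∀ f g, f ∈ U → g ∈ U → f + g ∈ U) ∧
    ∀ (c : ℝ) (f), f ∈ U → c • f ∈ U

/-- A Riesz space of functions: a subspace closed under pointwise absolute value. -/
def IsRiesz {Z : Type*} (R : Set (Z → ℝ)) : Prop :=
  IsSubspace R ∧ ∀ f, f ∈ R → |f| ∈ R

/-- A Lebesgue lattice: a Riesz space closed under dominated pointwise limits. -/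
def IsLebesgue {Z : Type*} (L : Set (Z → ℝ)) : Prop :=
  IsRiesz L ∧ Pdom L ⊆ L

/-- smallest Riesz space containing `M`. -/
def RGen {Z : Type*} (M : Set (Z → ℝ)) : Set (Z → ℝ) :=
  ⋂₀ { R | IsRiesz R ∧ M ⊆ R }

/-- smallest Lebesgue lattice containing `M`. -/
def LGen {Z : Type*} (M : Set (Z → ℝ)) : Set (Z → ℝ) :=
  ⋂₀ { L | IsLebesgue L ∧ M ⊆ L }

/-- Daniell integral on `R`: additive, homogeneous, monotone, continuous under
decreasing convergence to `0`. -/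
def IsDaniell {Z : Type*} (R : Set (Z → ℝ)) (I : (Z → ℝ) → ℝ) : Prop :=
  IsRiesz R ∧
  (∀ f g, f ∈ R → g ∈ R → I (f + g) = I f + I g) ∧
  (∀ (c : ℝ) (f), f ∈ R → I (c • f) = c * I f) ∧
  (∀ f, f ∈ R → I f ≤ I |f|) ∧
  ∀ F : ℕ → Z → ℝ, (∀ n, F n ∈ R) → (∀ n, 0 ≤ F (n + 1)) →
    (∀ n, F (n + 1) ≤ F n) →
    (∀ z, Tendsto (fun n => F n z) atTop (𝓝 0)) →
    Tendsto (fun n => I (F n)) atTop (𝓝 0)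

/-- elementary tensor `(g ⊗ h)(x, y) = g x * h y`. -/
def tensor {X Y : Type*} (g : X → ℝ) (h : Y → ℝ) : X × Y → ℝ :=
  fun p => g p.1 * h p.2

/-- tensor product `V ⊗ W`: finite sums of elementary tensors. -/
def TensorSet {X Y : Type*} (V : Set (X → ℝ)) (W : Set (Y → ℝ)) :
    Set (X × Y → ℝ) :=
  { f | ∃ (k : ℕ) (g : Fin k → X → ℝ) (h : Fin k → Y → ℝ),
      (∀ i, g i ∈ V) ∧ (∀ i, h i ∈ W) ∧ f = ∑ i, tensor (g i) (h i) }

/-- `iterP U m`: `U₁ = U`, `U_{m+1} = P(U_m)` (0-indexed). -/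
def iterP {Z : Type*} (U : Set (Z → ℝ)) : ℕ → Set (Z → ℝ)
  | 0 => U
  | n + 1 => Pdom (iterP U n)


set_option linter.unusedSectionVars false
namespace Stmt12
variable {Z : Type*}

section Riesz
variable {S : Set (Z → ℝ)} (hS : IsRiesz S)

lemma riesz_neg_mem (hS : IsRiesz S) {f : Z → ℝ} (hf : f ∈ S) : -f ∈ S := by
  have := hS.1.2.2 (-1) f hf
  simpa using this

lemma riesz_sub_mem (hS : IsRiesz S) {f g : Z → ℝ} (hf : f ∈ S) (hg : g ∈ S) :
    f - g ∈ S := by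
  have := hS.1.2.1 f (-g) hf (riesz_neg_mem hS hg)
  simpa [sub_eq_add_neg] using this

lemma max_eq_formula (a b : ℝ) : max a b = 2⁻¹ * (a + b + |a - b|) := by
  rcases le_total a b with h | h
  · rw [max_eq_right h, abs_of_nonpos (by linarith)]; ring
  · rw [max_eq_left h, abs_of_nonneg (by linarith)]; ring

lemma riesz_sup_mem (hS : IsRiesz S) {f g : Z → ℝ} (hf : f ∈ S) (hg : g ∈ S) :
    f ⊔ g ∈ S := by
  have hmem : (2⁻¹ : ℝ) • (f + g + |f - g|) ∈ S :=
    hS.1.2.2 _ _ (hS.1.2.1 _ _ (hS.1.2.1 _ _ hf hg) (hS.2 _ (riesz_sub_mem hS hf hg)))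
  have : f ⊔ g = (2⁻¹ : ℝ) • (f + g + |f - g|) := by
    funext z
    simp only [Pi.sup_apply, Pi.smul_apply, Pi.add_apply, Pi.abs_apply, Pi.sub_apply,
      smul_eq_mul]
    exact max_eq_formula _ _
  rw [this]; exact hmem

lemma riesz_inf_mem (hS : IsRiesz S) {f g : Z → ℝ} (hf : f ∈ S) (hg : g ∈ S) :
    f ⊓ g ∈ S := by
  have hmem : -((-f) ⊔ (-g)) ∈ S := riesz_neg_mem hS (riesz_sup_mem hS (riesz_neg_mem hS hf) (riesz_neg_mem hS hg))
  have : f ⊓ g = -((-f) ⊔ (-g)) := by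
    funext z
    simp only [Pi.inf_apply, Pi.neg_apply, Pi.sup_apply]
    rcases le_total (f z) (g z) with h | h
    · rw [min_eq_left h, max_eq_left (neg_le_neg h)]; ring
    · rw [min_eq_right h, max_eq_right (neg_le_neg h)]; ring
  rw [this]; exact hmem

lemma riesz_posPart_mem (hS : IsRiesz S) {f : Z → ℝ} (hf : f ∈ S) : f ⊔ 0 ∈ S :=
  riesz_sup_mem hS hf hS.1.1

lemma riesz_sum_mem (hS : IsRiesz S) (g : ℕ → Z → ℝ) (hg : ∀ k, g k ∈ S) (n : ℕ) :
    ∑ k ∈ Finset.range n, g k ∈ S := by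
  induction n with
  | zero => simpa using hS.1.1
  | succ n ih =>
      rw [Finset.sum_range_succ]
      exact hS.1.2.1 _ _ ih (hg n)

end Riesz

section DaniellBasic
variable {S : Set (Z → ℝ)} {J : (Z → ℝ) → ℝ}

lemma daniell_neg (hJ : IsDaniell S J) {f : Z → ℝ} (hf : f ∈ S) : J (-f) = -J f := by
  have := hJ.2.2.1 (-1) f hf
  simpa using this

lemma daniell_pos (hJ : IsDaniell S J) {f : Z → ℝ} (hf : f ∈ S) (h0 : 0 ≤ f) :
    0 ≤ J f := by
  have h1 : J (-f) ≤ J |(-f)| := hJ.2.2.2.1 (-f) (riesz_neg_mem hJ.1 hf)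
  have h2 : |(-f)| = f := by
    funext z
    have : (0:ℝ) ≤ f z := h0 z
    simp [abs_of_nonpos, this, abs_of_nonneg]
  rw [h2, daniell_neg hJ hf] at h1
  linarith

lemma daniell_sub (hJ : IsDaniell S J) {f g : Z → ℝ} (hf : f ∈ S) (hg : g ∈ S) :
    J (f - g) = J f - J g := by
  have h1 : J (f - g + g) = J (f - g) + J g := hJ.2.1 _ _ (riesz_sub_mem hJ.1 hf hg) hg
  rw [sub_add_cancel] at h1
  linarith

lemma daniell_mono (hJ : IsDaniell S J) {f g : Z → ℝ} (hf : f ∈ S) (hg : g ∈ S)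
    (hle : f ≤ g) : J f ≤ J g := by
  have h0 : 0 ≤ J (g - f) := daniell_pos hJ (riesz_sub_mem hJ.1 hg hf)
    (fun z => by have := hle z; simp [Pi.sub_apply]; linarith)
  rw [daniell_sub hJ hg hf] at h0
  linarith

lemma daniell_zero (hJ : IsDaniell S J) : J 0 = 0 := by
  have := hJ.2.2.1 0 0 hJ.1.1.1
  simpa using this

lemma daniell_sum (hJ : IsDaniell S J) (g : ℕ → Z → ℝ) (hg : ∀ k, g k ∈ S) (n : ℕ) :
    J (∑ k ∈ Finset.range n, g k) = ∑ k ∈ Finset.range n, J (g k) := by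
  induction n with
  | zero => simpa using daniell_zero hJ
  | succ n ih =>
      rw [Finset.sum_range_succ, Finset.sum_range_succ,
        hJ.2.1 _ _ (riesz_sum_mem hJ.1 g hg n) (hg n), ih]

end DaniellBasic


/-- admissible upper approximation: an increasing sequence in `R` whose pointwise
sup dominates `f`, with `I`-values tending to `c`. -/
def Adm (R : Set (Z → ℝ)) (I : (Z → ℝ) → ℝ) (f : Z → ℝ) (c : ℝ) : Prop :=
  ∃ h : ℕ → Z → ℝ, (∀ n, h n ∈ R) ∧ (∀ n, h n ≤ h (n + 1)) ∧
    (∀ z, ∀ ε > 0, ∃ n, f z ≤ h n z + ε) ∧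
    Tendsto (fun n => I (h n)) atTop (𝓝 c)

/-- membership in the Daniell `L¹` class. -/
def Memℒ (R : Set (Z → ℝ)) (I : (Z → ℝ) → ℝ) (f : Z → ℝ) : Prop :=
  ∀ ε > 0, ∃ c d, Adm R I f c ∧ Adm R I (-f) d ∧ c + d ≤ ε

/-- the extended integral. -/
noncomputable def IbarDef (R : Set (Z → ℝ)) (I : (Z → ℝ) → ℝ) (f : Z → ℝ) : ℝ :=
  sInf {c | Adm R I f c}

section Core
variable {R : Set (Z → ℝ)} {I : (Z → ℝ) → ℝ} (hI : IsDaniell R I)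
include hI

omit hI in
lemma seq_mono {h : ℕ → Z → ℝ} (hm : ∀ n, h n ≤ h (n + 1)) : Monotone h :=
  monotone_nat_of_le_succ hm

/-- Key Daniell lemma: if `g ∈ R` is dominated by the sup of an admissible
sequence then `I g ≤ c`. -/
lemma keyB {h : ℕ → Z → ℝ} (hmem : ∀ n, h n ∈ R) (hm : ∀ n, h n ≤ h (n + 1))
    {g : Z → ℝ} (hg : g ∈ R) (hdom : ∀ z, ∀ ε > 0, ∃ n, g z ≤ h n z + ε)
    {c : ℝ} (hc : Tendsto (fun n => I (h n)) atTop (𝓝 c)) : I g ≤ c := by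
  set d : ℕ → Z → ℝ := fun n => (g - h n) ⊔ 0 with hd
  have hdmem : ∀ n, d n ∈ R := fun n =>
    riesz_posPart_mem hI.1 (riesz_sub_mem hI.1 hg (hmem n))
  have hdnonneg : ∀ n, 0 ≤ d (n + 1) := fun n z => by
    simp [hd, Pi.sup_apply]
  have hddec : ∀ n, d (n + 1) ≤ d n := fun n z => by
    have := hm n z
    simp only [hd, Pi.sup_apply, Pi.sub_apply, Pi.zero_apply]
    exact max_le_max (by linarith) le_rfl
  have hdlim : ∀ z, Tendsto (fun n => d n z) atTop (𝓝 0) := by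
    intro z
    rw [Metric.tendsto_atTop]
    intro ε hε
    obtain ⟨N, hN⟩ := hdom z (ε / 2) (by linarith)
    refine ⟨N, fun n hn => ?_⟩
    have h1 : h N z ≤ h n z := seq_mono hm hn z
    have h2 : d n z ≤ ε / 2 := by
      simp only [hd, Pi.sup_apply, Pi.sub_apply, Pi.zero_apply]
      exact max_le (by linarith) (by linarith)
    have h3 : (0:ℝ) ≤ d n z := by
      simp only [hd, Pi.sup_apply, Pi.sub_apply, Pi.zero_apply]
      exact le_max_right _ _
    rw [Real.dist_eq, sub_zero, abs_of_nonneg h3]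
    linarith
  have hItend : Tendsto (fun n => I (d n)) atTop (𝓝 0) :=
    hI.2.2.2.2 d hdmem hdnonneg hddec hdlim
  have hle : ∀ n, I g ≤ I (h n) + I (d n) := by
    intro n
    have hmem' : h n + d n ∈ R := hI.1.1.2.1 _ _ (hmem n) (hdmem n)
    have : g ≤ h n + d n := fun z => by
      simp only [Pi.add_apply, hd, Pi.sup_apply, Pi.sub_apply, Pi.zero_apply]
      have := le_max_left (g z - h n z) 0
      linarith
    calc I g ≤ I (h n + d n) := daniell_mono hI hg hmem' this
    _ = I (h n) + I (d n) := hI.2.1 _ _ (hmem n) (hdmem n)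
  have : Tendsto (fun n => I (h n) + I (d n)) atTop (𝓝 (c + 0)) := hc.add hItend
  simpa using ge_of_tendsto' this hle

local notation "𝓛" => Memℒ R I
local notation "Ib" => IbarDef R I

/-- the "zero lemma": upper values for `f` and `-f` sum to something nonnegative. -/
lemma adm_nonneg {f : Z → ℝ} {c d : ℝ} (hc : Adm R I f c) (hd : Adm R I (-f) d) :
    0 ≤ c + d := by
  obtain ⟨h, hmem, hm, hdom, hc⟩ := hc
  obtain ⟨k, kmem, km, kdom, hd⟩ := hd
  have h0 : I (0 : Z → ℝ) ≤ c + d := by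
    refine keyB hI (h := fun n => h n + k n) (fun n => hI.1.1.2.1 _ _ (hmem n) (kmem n))
      (fun n z => by have := hm n z; have := km n z; simp only [Pi.add_apply]; linarith)
      hI.1.1.1 ?_ ?_
    · intro z ε hε
      obtain ⟨n, hn⟩ := hdom z (ε/2) (by linarith)
      obtain ⟨m, hm'⟩ := kdom z (ε/2) (by linarith)
      refine ⟨max n m, ?_⟩
      have h1 : h n z ≤ h (max n m) z := seq_mono hm (le_max_left n m) z
      have h2 : k m z ≤ k (max n m) z := seq_mono km (le_max_right n m) z
      simp only [Pi.add_apply, Pi.zero_apply]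
      have := hn
      have h3 : -f z ≤ k m z + ε/2 := hm' 
      linarith
    · have : (fun n => I (h n + k n)) = fun n => I (h n) + I (k n) := by
        funext n; exact hI.2.1 _ _ (hmem n) (kmem n)
      rw [this]; exact hc.add hd
  rwa [daniell_zero hI] at h0

lemma adm_add {f g : Z → ℝ} {c d : ℝ} (hc : Adm R I f c) (hd : Adm R I g d) :
    Adm R I (f + g) (c + d) := by
  obtain ⟨h, hmem, hm, hdom, hc⟩ := hc
  obtain ⟨k, kmem, km, kdom, hd⟩ := hd
  refine ⟨fun n => h n + k n, fun n => hI.1.1.2.1 _ _ (hmem n) (kmem n),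
    fun n z => by have := hm n z; have := km n z; simp only [Pi.add_apply]; linarith,
    ?_, ?_⟩
  · intro z ε hε
    obtain ⟨n, hn⟩ := hdom z (ε/2) (by linarith)
    obtain ⟨m, hm'⟩ := kdom z (ε/2) (by linarith)
    refine ⟨max n m, ?_⟩
    have h1 : h n z ≤ h (max n m) z := seq_mono hm (le_max_left n m) z
    have h2 : k m z ≤ k (max n m) z := seq_mono km (le_max_right n m) z
    simp only [Pi.add_apply]
    linarith
  · have : (fun n => I (h n + k n)) = fun n => I (h n) + I (k n) := by
      funext n; exact hI.2.1 _ _ (hmem n) (kmem n)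
    rw [this]; exact hc.add hd

omit hI in
lemma adm_mono {f g : Z → ℝ} {c : ℝ} (hle : f ≤ g) (hc : Adm R I g c) :
    Adm R I f c := by
  obtain ⟨h, hmem, hm, hdom, hc⟩ := hc
  exact ⟨h, hmem, hm, fun z ε hε => by
    obtain ⟨n, hn⟩ := hdom z ε hε; exact ⟨n, le_trans (hle z) hn⟩, hc⟩

lemma adm_smul {f : Z → ℝ} {c : ℝ} {a : ℝ} (ha : 0 < a) (hc : Adm R I f c) :
    Adm R I (a • f) (a * c) := by
  obtain ⟨h, hmem, hm, hdom, hc⟩ := hc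
  refine ⟨fun n => a • h n, fun n => hI.1.1.2.2 a _ (hmem n),
    fun n z => by have := hm n z; simp only [Pi.smul_apply, smul_eq_mul]; nlinarith,
    ?_, ?_⟩
  · intro z ε hε
    obtain ⟨n, hn⟩ := hdom z (ε/a) (by positivity)
    refine ⟨n, ?_⟩
    simp only [Pi.smul_apply, smul_eq_mul]
    have h2 : a * (f z) ≤ a * (h n z + ε/a) := by nlinarith
    rw [mul_add] at h2
    rw [mul_div_cancel₀] at h2
    · linarith
    · exact ne_of_gt ha
  · have : (fun n => I (a • h n)) = fun n => a * I (h n) := by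
      funext n; exact hI.2.2.1 a _ (hmem n)
    rw [this]
    exact hc.const_mul a

lemma adm_of_mem {f : Z → ℝ} (hf : f ∈ R) : Adm R I f (I f) :=
  ⟨fun _ => f, fun _ => hf, fun _ => le_rfl,
    fun z ε hε => ⟨0, by linarith⟩, tendsto_const_nhds⟩

lemma adm_le {f : Z → ℝ} {c : ℝ} (hf : f ∈ R) (hc : Adm R I f c) : I f ≤ c := by
  obtain ⟨h, hmem, hm, hdom, hc⟩ := hc
  exact keyB hI hmem hm hf hdom hc

/-- basic facts about `Ib` on `𝓛`. -/
lemma memL_nonempty {f : Z → ℝ} (hf : 𝓛 f) : ∃ c, Adm R I f c := by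
  obtain ⟨c, d, hc, hd, _⟩ := hf 1 one_pos
  exact ⟨c, hc⟩

lemma memL_bddBelow {f : Z → ℝ} (hf : 𝓛 f) : BddBelow {c | Adm R I f c} := by
  obtain ⟨c, d, hc, hd, _⟩ := hf 1 one_pos
  exact ⟨-d, fun c' hc' => by have := adm_nonneg hI hc' hd; linarith⟩

lemma ibar_le {f : Z → ℝ} (hf : 𝓛 f) {c : ℝ} (hc : Adm R I f c) : Ib f ≤ c :=
  csInf_le (memL_bddBelow hI hf) hc

lemma ibar_ge {f : Z → ℝ} (hf : 𝓛 f) {d : ℝ} (hd : Adm R I (-f) d) : -d ≤ Ib f := by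
  obtain ⟨c, hc⟩ := memL_nonempty hI hf
  exact le_csInf ⟨c, hc⟩ (fun c' hc' => by have := adm_nonneg hI hc' hd; linarith)

lemma ibar_approx {f : Z → ℝ} (hf : 𝓛 f) {ε : ℝ} (hε : 0 < ε) :
    ∃ c d, Adm R I f c ∧ Adm R I (-f) d ∧ c ≤ Ib f + ε ∧ d ≤ -(Ib f) + ε := by
  obtain ⟨c, d, hc, hd, hcd⟩ := hf ε hε
  have h1 : Ib f ≤ c := ibar_le hI hf hc
  have h2 : -d ≤ Ib f := ibar_ge hI hf hd
  exact ⟨c, d, hc, hd, by linarith, by linarith⟩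

lemma memL_neg {f : Z → ℝ} (hf : 𝓛 f) : 𝓛 (-f) := by
  intro ε hε
  obtain ⟨c, d, hc, hd, hcd⟩ := hf ε hε
  exact ⟨d, c, hd, by simpa using hc, by linarith⟩

lemma ibar_neg {f : Z → ℝ} (hf : 𝓛 f) : Ib (-f) = -(Ib f) := by
  have key : ∀ ε > 0, |Ib (-f) - (-(Ib f))| ≤ 2 * ε := by
    intro ε hε
    obtain ⟨c, d, hc, hd, h1, h2⟩ := ibar_approx hI hf hε
    have h3 : Ib (-f) ≤ d := ibar_le hI (memL_neg hI hf) hd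
    have h4 : -c ≤ Ib (-f) := ibar_ge hI (memL_neg hI hf) (by simpa using hc)
    have h5 : Ib f ≤ c := ibar_le hI hf hc
    have h6 : -d ≤ Ib f := ibar_ge hI hf hd
    rw [abs_le]; constructor <;> linarith
  have h0 : |Ib (-f) - (-(Ib f))| ≤ 0 := by
    refine le_of_forall_pos_le_add ?_
    intro ε hε
    have := key (ε/2) (by linarith)
    linarith
  have := abs_nonneg (Ib (-f) - (-(Ib f)))
  have : Ib (-f) - (-(Ib f)) = 0 := by
    have := abs_eq_zero.mp (le_antisymm h0 (abs_nonneg _))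
    exact this
  linarith

lemma memL_add {f g : Z → ℝ} (hf : 𝓛 f) (hg : 𝓛 g) : 𝓛 (f + g) := by
  intro ε hε
  obtain ⟨c, d, hc, hd, hcd⟩ := hf (ε/2) (by linarith)
  obtain ⟨c', d', hc', hd', hcd'⟩ := hg (ε/2) (by linarith)
  refine ⟨c + c', d + d', adm_add hI hc hc', ?_, by linarith⟩
  have e : -(f + g) = -f + -g := neg_add f g
  rw [e]
  exact adm_add hI hd hd'

lemma ibar_add {f g : Z → ℝ} (hf : 𝓛 f) (hg : 𝓛 g) : Ib (f + g) = Ib f + Ib g := by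
  have hfg : 𝓛 (f + g) := memL_add hI hf hg
  have key : ∀ ε > 0, |Ib (f + g) - (Ib f + Ib g)| ≤ 2 * ε := by
    intro ε hε
    obtain ⟨c, d, hc, hd, h1, h2⟩ := ibar_approx hI hf (half_pos hε)
    obtain ⟨c', d', hc', hd', h1', h2'⟩ := ibar_approx hI hg (half_pos hε)
    have hup : Ib (f + g) ≤ c + c' := ibar_le hI hfg (adm_add hI hc hc')
    have hdn : -(d + d') ≤ Ib (f + g) := ibar_ge hI hfg
      (by rw [neg_add]; exact adm_add hI hd hd')
    have e5 : Ib f ≤ c := ibar_le hI hf hc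
    have e6 : -d ≤ Ib f := ibar_ge hI hf hd
    have e7 : Ib g ≤ c' := ibar_le hI hg hc'
    have e8 : -d' ≤ Ib g := ibar_ge hI hg hd'
    rw [abs_le]; constructor <;> linarith
  have h0 : |Ib (f + g) - (Ib f + Ib g)| ≤ 0 := by
    refine le_of_forall_pos_le_add ?_
    intro ε hε
    have := key (ε/2) (by linarith)
    linarith
  have : Ib (f + g) - (Ib f + Ib g) = 0 := abs_eq_zero.mp (le_antisymm h0 (abs_nonneg _))
  linarith

lemma memL_of_mem {f : Z → ℝ} (hf : f ∈ R) : 𝓛 f := by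
  intro ε hε
  refine ⟨I f, I (-f), adm_of_mem hI hf, adm_of_mem hI (riesz_neg_mem hI.1 hf), ?_⟩
  rw [daniell_neg hI hf]; linarith

lemma ibar_eq_of_mem {f : Z → ℝ} (hf : f ∈ R) : Ib f = I f := by
  refine le_antisymm (ibar_le hI (memL_of_mem hI hf) (adm_of_mem hI hf)) ?_
  refine le_csInf ⟨I f, adm_of_mem hI hf⟩ (fun c hc => adm_le hI hf hc)

lemma ibar_mono {f g : Z → ℝ} (hf : 𝓛 f) (hg : 𝓛 g) (hle : f ≤ g) : Ib f ≤ Ib g := by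
  refine le_csInf (memL_nonempty hI hg) (fun c hc => ?_)
  exact csInf_le (memL_bddBelow hI hf) (adm_mono hle hc)

lemma memL_smul {f : Z → ℝ} (hf : 𝓛 f) (a : ℝ) : 𝓛 (a • f) := by
  rcases lt_trichotomy a 0 with ha | ha | ha
  · have h1 : 𝓛 ((-a) • (-f)) := by
      intro ε hε
      have hεa : 0 < ε / (-a) := div_pos hε (by linarith)
      obtain ⟨c, d, hc, hd, hcd⟩ := memL_neg hI hf (ε / (-a)) hεa
      refine ⟨(-a) * c, (-a) * d, adm_smul hI (by linarith) hc, ?_, ?_⟩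
      · have : -((-a) • (-f)) = (-a) • (- -f) := by
          funext z; simp
        rw [this]
        exact adm_smul hI (by linarith) (by simpa using hd)
      · have : (-a) * c + (-a) * d = (-a) * (c + d) := by ring
        rw [this]
        calc (-a) * (c + d) ≤ (-a) * (ε / (-a)) := by nlinarith
        _ = ε := by
          rw [mul_div_cancel₀]
          exact ne_of_gt (by linarith)
    have : (-a) • (-f) = a • f := by funext z; simp
    rwa [this] at h1
  · subst ha
    have : (0:ℝ) • f = 0 := by funext z; simp
    rw [this]
    exact memL_of_mem hI hI.1.1.1
  · intro ε hε
    have hεa : 0 < ε / a := by positivity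
    obtain ⟨c, d, hc, hd, hcd⟩ := hf (ε / a) hεa
    refine ⟨a * c, a * d, adm_smul hI ha hc, ?_, ?_⟩
    · have : -(a • f) = a • (-f) := by funext z; simp
      rw [this]
      exact adm_smul hI ha hd
    · have : a * c + a * d = a * (c + d) := by ring
      rw [this]
      calc a * (c + d) ≤ a * (ε / a) := by nlinarith
      _ = ε := by field_simp

lemma ibar_smul {f : Z → ℝ} (hf : 𝓛 f) (a : ℝ) : Ib (a • f) = a * Ib f := by
  have key : ∀ a > (0:ℝ), ∀ g : Z → ℝ, 𝓛 g → Ib (a • g) = a * Ib g := by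
    intro a ha g hg
    have hL : 𝓛 (a • g) := memL_smul hI hg a
    have key2 : ∀ ε > 0, |Ib (a • g) - a * Ib g| ≤ (a + 1) * ε := by
      intro ε hε
      obtain ⟨c, d, hc, hd, h1, h2⟩ := ibar_approx hI hg hε
      have hup : Ib (a • g) ≤ a * c := ibar_le hI hL (adm_smul hI ha hc)
      have hdn : -(a * d) ≤ Ib (a • g) := ibar_ge hI hL
        (by have := adm_smul hI ha hd
            have e : a • (-g) = -(a • g) := by funext z; simp
            rwa [e] at this)
      rw [abs_le]; constructor <;> nlinarith
    have h0 : |Ib (a • g) - a * Ib g| ≤ 0 := by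
      refine le_of_forall_pos_le_add ?_
      intro ε hε
      have := key2 (ε / (a + 1)) (by positivity)
      have e : (a+1) * (ε / (a+1)) = ε := by field_simp
      rw [e] at this
      linarith
    have : Ib (a • g) - a * Ib g = 0 := abs_eq_zero.mp (le_antisymm h0 (abs_nonneg _))
    linarith
  rcases lt_trichotomy a 0 with ha | ha | ha
  · have e : a • f = (-a) • (-f) := by funext z; simp
    rw [e, key (-a) (by linarith) (-f) (memL_neg hI hf), ibar_neg hI hf]
    ring
  · subst ha
    have e : (0:ℝ) • f = 0 := by funext z; simp
    rw [e]
    have : Ib (0 : Z → ℝ) = I 0 := ibar_eq_of_mem hI hI.1.1.1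
    rw [this, daniell_zero hI]
    ring
  · exact key a ha f hf

lemma I_seq_le {h : ℕ → Z → ℝ} (hmem : ∀ n, h n ∈ R) (hm : ∀ n, h n ≤ h (n + 1))
    {c : ℝ} (hc : Tendsto (fun n => I (h n)) atTop (𝓝 c)) (n : ℕ) : I (h n) ≤ c :=
  (monotone_nat_of_le_succ
    (fun m => daniell_mono hI (hmem m) (hmem (m + 1)) (hm m))).ge_of_tendsto hc n

/-- nonnegative refinement of an admissible witness for a nonnegative target. -/
lemma adm_nonneg_witness {f : Z → ℝ} (hf0 : 0 ≤ f) {c : ℝ} (hc : Adm R I f c) :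
    ∃ h : ℕ → Z → ℝ, (∀ n, h n ∈ R) ∧ (∀ n, h n ≤ h (n + 1)) ∧ (∀ n, 0 ≤ h n) ∧
      (∀ z, ∀ ε > 0, ∃ n, f z ≤ h n z + ε) ∧
      Tendsto (fun n => I (h n)) atTop (𝓝 c) := by
  obtain ⟨h, hmem, hm, hdom, hc⟩ := hc
  set hm' : ℕ → Z → ℝ := fun n => (-h n) ⊔ 0 with hm'def
  have hm'mem : ∀ n, hm' n ∈ R := fun n => riesz_posPart_mem hI.1 (riesz_neg_mem hI.1 (hmem n))
  have hm'nonneg : ∀ n, 0 ≤ hm' (n + 1) := fun n z => by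
    simp [hm'def, Pi.sup_apply]
  have hm'dec : ∀ n, hm' (n + 1) ≤ hm' n := fun n z => by
    have := hm n z
    simp only [hm'def, Pi.sup_apply, Pi.neg_apply, Pi.zero_apply]
    exact max_le_max (by linarith) le_rfl
  have hm'lim : ∀ z, Tendsto (fun n => hm' n z) atTop (𝓝 0) := by
    intro z
    rw [Metric.tendsto_atTop]
    intro ε hε
    obtain ⟨N, hN⟩ := hdom z (ε / 2) (by linarith)
    refine ⟨N, fun n hn => ?_⟩
    have h1 : h N z ≤ h n z := seq_mono hm hn z
    have h2 : (0:ℝ) ≤ f z := hf0 z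
    have h3 : hm' n z ≤ ε / 2 := by
      simp only [hm'def, Pi.sup_apply, Pi.neg_apply, Pi.zero_apply]
      exact max_le (by linarith) (by linarith)
    have h4 : (0:ℝ) ≤ hm' n z := by
      simp only [hm'def, Pi.sup_apply, Pi.neg_apply, Pi.zero_apply]
      exact le_max_right _ _
    rw [Real.dist_eq, sub_zero, abs_of_nonneg h4]
    linarith
  have hm'tend : Tendsto (fun n => I (hm' n)) atTop (𝓝 0) :=
    hI.2.2.2.2 hm' hm'mem hm'nonneg hm'dec hm'lim
  refine ⟨fun n => h n + hm' n, fun n => hI.1.1.2.1 _ _ (hmem n) (hm'mem n), ?_, ?_, ?_, ?_⟩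
  · intro n z
    have h1 := hm n z
    have h2 := hm'dec n z
    simp only [Pi.add_apply, hm'def, Pi.sup_apply, Pi.neg_apply, Pi.zero_apply] at *
    rcases le_total (h n z) 0 with hh | hh
    · rw [max_eq_left (by linarith)]
      rcases le_total (h (n+1) z) 0 with hh2 | hh2
      · rw [max_eq_left (by linarith)]; linarith
      · rw [max_eq_right (by linarith)]; linarith
    · rw [max_eq_right (by linarith)]
      rcases le_total (h (n+1) z) 0 with hh2 | hh2
      · rw [max_eq_left (by linarith)]; linarith
      · rw [max_eq_right (by linarith)]; linarith
  · intro n z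
    simp only [Pi.add_apply, Pi.zero_apply, hm'def, Pi.sup_apply, Pi.neg_apply]
    rcases le_total (h n z) 0 with hh | hh
    · rw [max_eq_left (by linarith)]; linarith
    · rw [max_eq_right (by linarith)]; linarith
  · intro z ε hε
    obtain ⟨n, hn⟩ := hdom z ε hε
    refine ⟨n, ?_⟩
    simp only [Pi.add_apply]
    have : (0:ℝ) ≤ hm' n z := by
      simp only [hm'def, Pi.sup_apply, Pi.neg_apply, Pi.zero_apply]
      exact le_max_right _ _
    linarith
  · have e : (fun n => I (h n + hm' n)) = fun n => I (h n) + I (hm' n) := by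
      funext n; exact hI.2.1 _ _ (hmem n) (hm'mem n)
    rw [e]
    simpa using hc.add hm'tend

/-- Monotone convergence. -/
lemma MCT {f : ℕ → Z → ℝ} {F : Z → ℝ} (hf : ∀ n, 𝓛 (f n))
    (hmono : ∀ n, f n ≤ f (n + 1))
    (hlim : ∀ z, Tendsto (fun n => f n z) atTop (𝓝 (F z)))
    {B : ℝ} (hB : ∀ n, Ib (f n) ≤ B) :
    𝓛 F ∧ Tendsto (fun n => Ib (f n)) atTop (𝓝 (Ib F)) := by
  set a : ℕ → ℝ := fun n => Ib (f n) with ha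
  have ha_mono : Monotone a := monotone_nat_of_le_succ
    (fun n => ibar_mono hI (hf n) (hf (n + 1)) (hmono n))
  have ha_bdd : BddAbove (Set.range a) := ⟨B, by rintro x ⟨n, rfl⟩; exact hB n⟩
  set A := ⨆ n, a n with hA
  have ha_tend : Tendsto a atTop (𝓝 A) := tendsto_atTop_ciSup ha_mono ha_bdd
  have haA : ∀ n, a n ≤ A := ha_mono.ge_of_tendsto ha_tend
  have hfF : ∀ n, f n ≤ F := fun n z =>
    (monotone_nat_of_le_succ (fun m => hmono m z)).ge_of_tendsto (hlim z) n
  -- the key upper-approximation claim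
  have claim : ∀ ε > 0, ∃ c, Adm R I F c ∧ c ≤ A + ε / 2 := by
    intro ε hε
    obtain ⟨c₀, d₀, hc₀, _, hc₀le, _⟩ := ibar_approx hI (hf 0) (show (0:ℝ) < ε/8 by linarith)
    obtain ⟨h₀, h₀mem, h₀m, h₀dom, h₀tend⟩ := hc₀
    have hgL : ∀ k, 𝓛 (f (k + 1) - f k) := by
      intro k
      have := memL_add hI (hf (k + 1)) (memL_neg hI (hf k))
      rwa [← sub_eq_add_neg] at this
    have hgIb : ∀ k, Ib (f (k + 1) - f k) = a (k + 1) - a k := by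
      intro k
      rw [sub_eq_add_neg, ibar_add hI (hf (k + 1)) (memL_neg hI (hf k)),
        ibar_neg hI (hf k)]
      ring
    have hg0 : ∀ k, (0 : Z → ℝ) ≤ f (k + 1) - f k := fun k z => by
      have := hmono k z; simp only [Pi.sub_apply, Pi.zero_apply]; linarith
    have hch : ∀ k : ℕ, ∃ (h : ℕ → Z → ℝ) (c : ℝ), (∀ n, h n ∈ R) ∧
        (∀ n, h n ≤ h (n + 1)) ∧ (∀ n, 0 ≤ h n) ∧
        (∀ z, ∀ δ > 0, ∃ n, (f (k + 1) - f k) z ≤ h n z + δ) ∧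
        Tendsto (fun n => I (h n)) atTop (𝓝 c) ∧
        c ≤ a (k + 1) - a k + ε / 8 * (1 / 2) ^ k := by
      intro k
      have hpos : (0:ℝ) < ε / 8 * (1 / 2) ^ k := by positivity
      obtain ⟨c, d, hc, _, hcle, _⟩ := ibar_approx hI (hgL k) hpos
      obtain ⟨h, hmem, hm, hpos', hdom, htend⟩ := adm_nonneg_witness hI (hg0 k) hc
      rw [hgIb k] at hcle
      exact ⟨h, c, hmem, hm, hpos', hdom, htend, hcle⟩
    choose hs cs hsmem hsm hspos hsdom hstend hsbound using hch
    set H : ℕ → Z → ℝ := fun n => h₀ n + ∑ k ∈ Finset.range n, hs k n with hH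
    have hHmem : ∀ n, H n ∈ R := fun n =>
      hI.1.1.2.1 _ _ (h₀mem n) (riesz_sum_mem hI.1 (fun k => hs k n) (fun k => hsmem k n) n)
    have hHm : ∀ n, H n ≤ H (n + 1) := by
      intro n z
      simp only [hH, Pi.add_apply, Finset.sum_apply]
      have e1 : h₀ n z ≤ h₀ (n + 1) z := h₀m n z
      have e2 : ∑ k ∈ Finset.range n, hs k n z ≤ ∑ k ∈ Finset.range n, hs k (n + 1) z :=
        Finset.sum_le_sum (fun k _ => hsm k n z)
      have e3 : (0:ℝ) ≤ hs n (n + 1) z := hspos n (n + 1) z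
      rw [Finset.sum_range_succ]
      linarith
    have hIH : ∀ n, I (H n) = I (h₀ n) + ∑ k ∈ Finset.range n, I (hs k n) := by
      intro n
      rw [hI.2.1 _ _ (h₀mem n) (riesz_sum_mem hI.1 (fun k => hs k n) (fun k => hsmem k n) n),
        daniell_sum hI (fun k => hs k n) (fun k => hsmem k n) n]
    have hIHle : ∀ n, I (H n) ≤ A + ε / 2 := by
      intro n
      rw [hIH n]
      have e1 : I (h₀ n) ≤ c₀ := I_seq_le hI h₀mem h₀m h₀tend n
      have e2 : ∑ k ∈ Finset.range n, I (hs k n) ≤ ∑ k ∈ Finset.range n, cs k :=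
        Finset.sum_le_sum (fun k _ => I_seq_le hI (hsmem k) (hsm k) (hstend k) n)
      have e3 : ∑ k ∈ Finset.range n, cs k ≤
          (a n - a 0) + ε / 8 * ∑ k ∈ Finset.range n, (1 / 2 : ℝ) ^ k := by
        have e4 : ∑ k ∈ Finset.range n, cs k ≤
            ∑ k ∈ Finset.range n, (a (k + 1) - a k + ε / 8 * (1 / 2) ^ k) :=
          Finset.sum_le_sum (fun k _ => hsbound k)
        rw [Finset.sum_add_distrib, Finset.sum_range_sub, ← Finset.mul_sum] at e4
        exact e4
      have e5 : ∑ k ∈ Finset.range n, (1 / 2 : ℝ) ^ k ≤ 2 := sum_geometric_two_le n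
      have e6 : a n ≤ A := haA n
      have e7 : c₀ ≤ a 0 + ε / 8 := hc₀le
      nlinarith
    have hIHmono : Monotone fun n => I (H n) := monotone_nat_of_le_succ
      (fun n => daniell_mono hI (hHmem n) (hHmem (n + 1)) (hHm n))
    have hIHbdd : BddAbove (Set.range fun n => I (H n)) :=
      ⟨A + ε / 2, by rintro x ⟨n, rfl⟩; exact hIHle n⟩
    set c := ⨆ n, I (H n) with hc
    have hctend : Tendsto (fun n => I (H n)) atTop (𝓝 c) :=
      tendsto_atTop_ciSup hIHmono hIHbdd
    have hcle : c ≤ A + ε / 2 := ciSup_le hIHle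
    refine ⟨c, ⟨H, hHmem, hHm, ?_, hctend⟩, hcle⟩
    -- domination
    intro z δ hδ
    have hmex : ∃ m, F z ≤ f m z + δ / 2 := by
      obtain ⟨N, hN⟩ := Metric.tendsto_atTop.mp (hlim z) (δ / 2) (by linarith)
      have := hN N le_rfl
      rw [Real.dist_eq] at this
      have h2 := abs_lt.mp this
      exact ⟨N, by linarith [h2.1, h2.2]⟩
    obtain ⟨m, hmz⟩ := hmex
    set δ' := δ / (2 * (m + 1)) with hδ'
    have hδ'pos : 0 < δ' := by positivity
    obtain ⟨n₀, hn₀⟩ := h₀dom z δ' hδ'pos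
    have hnkex : ∀ k, ∃ n, (f (k + 1) - f k) z ≤ hs k n z + δ' :=
      fun k => hsdom k z δ' hδ'pos
    choose nk hnk using hnkex
    set N := max (max m n₀) ((Finset.range m).sup nk) with hNdef
    refine ⟨N, ?_⟩
    have hmN : m ≤ N := le_trans (le_max_left m n₀) (le_max_left _ _)
    have e0 : h₀ n₀ z ≤ h₀ N z :=
      seq_mono h₀m (le_trans (le_max_right m n₀) (le_max_left _ _)) z
    have e1 : ∀ k < m, hs k (nk k) z ≤ hs k N z := fun k hk =>
      seq_mono (hsm k)
        (le_trans (Finset.le_sup (Finset.mem_range.mpr hk)) (le_max_right _ _)) z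
    have e2 : ∑ k ∈ Finset.range m, (f (k + 1) z - f k z) ≤
        ∑ k ∈ Finset.range m, (hs k N z + δ') := by
      refine Finset.sum_le_sum (fun k hk => ?_)
      have := hnk k
      have := e1 k (Finset.mem_range.mp hk)
      simp only [Pi.sub_apply] at *
      linarith
    have e3 : ∑ k ∈ Finset.range m, (f (k + 1) z - f k z) = f m z - f 0 z :=
      Finset.sum_range_sub (fun k => f k z) m
    have e4 : ∑ k ∈ Finset.range m, (hs k N z + δ') =
        (∑ k ∈ Finset.range m, hs k N z) + m * δ' := by
      rw [Finset.sum_add_distrib]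
      simp [mul_comm]
    have e5 : ∑ k ∈ Finset.range m, hs k N z ≤ ∑ k ∈ Finset.range N, hs k N z := by
      refine Finset.sum_le_sum_of_subset_of_nonneg ?_ (fun k _ _ => hspos k N z)
      exact Finset.range_subset_range.mpr hmN
    have e6 : H N z = h₀ N z + ∑ k ∈ Finset.range N, hs k N z := by
      simp [hH, Finset.sum_apply]
    have e7 : (m + 1 : ℝ) * δ' = δ / 2 := by
      rw [hδ']
      field_simp
    have : F z ≤ h₀ N z + (∑ k ∈ Finset.range m, hs k N z) + (m + 1) * δ' + δ / 2 := by
      have := hn₀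
      nlinarith [e2, e3, e4]
    rw [e6]
    nlinarith [e5, e7]
  -- conclusion
  have hL : 𝓛 F := by
    intro ε hε
    obtain ⟨c, hc, hcle⟩ := claim (ε / 2) (by linarith)
    have hex : ∃ n, A - ε / 4 < a n :=
      exists_lt_of_lt_ciSup (by linarith : A - ε / 4 < A)
    obtain ⟨n, hn⟩ := hex
    obtain ⟨c', d, _, hd, _, hdle⟩ := ibar_approx hI (hf n) (show (0:ℝ) < ε / 4 by linarith)
    have hdF : Adm R I (-F) d := by
      refine adm_mono ?_ hd
      intro z
      simp only [Pi.neg_apply]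
      exact neg_le_neg (hfF n z)
    exact ⟨c, d, hc, hdF, by linarith⟩
  have hIbF : Ib F = A := by
    have hle : Ib F ≤ A := by
      refine le_of_forall_pos_le_add (fun ε hε => ?_)
      obtain ⟨c, hc, hcle⟩ := claim ε hε
      have := ibar_le hI hL hc
      linarith
    have hge : A ≤ Ib F :=
      le_of_tendsto ha_tend (Eventually.of_forall fun n => ibar_mono hI (hf n) hL (hfF n))
    linarith
  exact ⟨hL, hIbF ▸ ha_tend⟩

lemma adm_sup_inf {f g : Z → ℝ} {c d : ℝ} (hc : Adm R I f c) (hd : Adm R I g d) :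
    ∃ α β, Adm R I (f ⊔ g) α ∧ Adm R I (f ⊓ g) β ∧ α + β = c + d := by
  obtain ⟨h, hmem, hm, hdom, hc⟩ := hc
  obtain ⟨k, kmem, km, kdom, hd⟩ := hd
  set M : ℕ → Z → ℝ := fun n => h n ⊔ k n with hM
  set m : ℕ → Z → ℝ := fun n => h n ⊓ k n with hmm
  have hMmem : ∀ n, M n ∈ R := fun n => riesz_sup_mem hI.1 (hmem n) (kmem n)
  have hmmem : ∀ n, m n ∈ R := fun n => riesz_inf_mem hI.1 (hmem n) (kmem n)
  have hMm : ∀ n, M n ≤ M (n + 1) := fun n z => by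
    simp only [hM, Pi.sup_apply]
    exact max_le_max (hm n z) (km n z)
  have hmmo : ∀ n, m n ≤ m (n + 1) := fun n z => by
    simp only [hmm, Pi.inf_apply]
    exact min_le_min (hm n z) (km n z)
  have hsum : ∀ n, I (M n) + I (m n) = I (h n) + I (k n) := by
    intro n
    rw [← hI.2.1 _ _ (hMmem n) (hmmem n), ← hI.2.1 _ _ (hmem n) (kmem n)]
    congr 1
    funext z
    simp only [Pi.add_apply, hM, hmm, Pi.sup_apply, Pi.inf_apply]
    exact max_add_min _ _
  have hIM_mono : Monotone fun n => I (M n) := monotone_nat_of_le_succ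
    (fun n => daniell_mono hI (hMmem n) (hMmem (n + 1)) (hMm n))
  have hIM_bdd : BddAbove (Set.range fun n => I (M n)) := by
    refine ⟨c + d - I (m 0), ?_⟩
    rintro x ⟨n, rfl⟩
    have e2 : I (m 0) ≤ I (m n) :=
      daniell_mono hI (hmmem 0) (hmmem n) (seq_mono hmmo (Nat.zero_le n))
    have e3 : I (h n) ≤ c := I_seq_le hI hmem hm hc n
    have e4 : I (k n) ≤ d := I_seq_le hI kmem km hd n
    have := hsum n
    simp only
    linarith
  set α := ⨆ n, I (M n) with hα
  have hMtend : Tendsto (fun n => I (M n)) atTop (𝓝 α) :=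
    tendsto_atTop_ciSup hIM_mono hIM_bdd
  have hmtend : Tendsto (fun n => I (m n)) atTop (𝓝 (c + d - α)) := by
    have e : (fun n => I (m n)) = fun n => I (h n) + I (k n) - I (M n) := by
      funext n; have := hsum n; linarith
    rw [e]
    exact (hc.add hd).sub hMtend
  refine ⟨α, c + d - α, ⟨M, hMmem, hMm, ?_, hMtend⟩, ⟨m, hmmem, hmmo, ?_, hmtend⟩, by ring⟩
  · intro z ε hε
    obtain ⟨n, hn⟩ := hdom z ε hε
    obtain ⟨n', hn'⟩ := kdom z ε hε
    refine ⟨max n n', ?_⟩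
    have e1 : h n z ≤ h (max n n') z := seq_mono hm (le_max_left n n') z
    have e2 : k n' z ≤ k (max n n') z := seq_mono km (le_max_right n n') z
    simp only [hM, Pi.sup_apply]
    have e3 := le_sup_left (a := h (max n n') z) (b := k (max n n') z)
    have e4 := le_sup_right (a := h (max n n') z) (b := k (max n n') z)
    exact sup_le (by linarith) (by linarith)
  · intro z ε hε
    obtain ⟨n, hn⟩ := hdom z ε hε
    obtain ⟨n', hn'⟩ := kdom z ε hε
    refine ⟨max n n', ?_⟩
    have e1 : h n z ≤ h (max n n') z := seq_mono hm (le_max_left n n') z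
    have e2 : k n' z ≤ k (max n n') z := seq_mono km (le_max_right n n') z
    simp only [hmm, Pi.inf_apply]
    have e3 := inf_le_left (a := f z) (b := g z)
    have e4 := inf_le_right (a := f z) (b := g z)
    have e5 : f z ⊓ g z - ε ≤ h (max n n') z ⊓ k (max n n') z :=
      le_inf (by linarith) (by linarith)
    linarith

lemma memL_sup {f g : Z → ℝ} (hf : 𝓛 f) (hg : 𝓛 g) : 𝓛 (f ⊔ g) := by
  intro ε hε
  obtain ⟨c, cm, hc, hcm, hcle, hcmle⟩ := ibar_approx hI hf (show (0:ℝ) < ε/4 by linarith)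
  obtain ⟨d, dm, hd, hdm, hdle, hdmle⟩ := ibar_approx hI hg (show (0:ℝ) < ε/4 by linarith)
  obtain ⟨α, β, hα, hβ, hαβ⟩ := adm_sup_inf hI hc hd
  obtain ⟨α', β', hα', hβ', hαβ'⟩ := adm_sup_inf hI hcm hdm
  have e1 : (-f) ⊓ (-g) = -(f ⊔ g) := funext fun z => by
    simp only [Pi.inf_apply, Pi.neg_apply, Pi.sup_apply]
    exact min_neg_neg _ _
  have e2 : (-f) ⊔ (-g) = -(f ⊓ g) := funext fun z => by
    simp only [Pi.sup_apply, Pi.neg_apply, Pi.inf_apply]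
    exact max_neg_neg _ _
  rw [e1] at hβ'
  rw [e2] at hα'
  have h0 : 0 ≤ β + α' := adm_nonneg hI hβ hα'
  refine ⟨α, β', hα, hβ', by linarith⟩

lemma memL_inf {f g : Z → ℝ} (hf : 𝓛 f) (hg : 𝓛 g) : 𝓛 (f ⊓ g) := by
  have h1 := memL_sup hI (memL_neg hI hf) (memL_neg hI hg)
  have e2 : (-f) ⊔ (-g) = -(f ⊓ g) := funext fun z => by
    simp only [Pi.sup_apply, Pi.neg_apply, Pi.inf_apply]
    exact max_neg_neg _ _
  rw [e2] at h1
  have := memL_neg hI h1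
  rwa [neg_neg] at this

lemma memL_abs {f : Z → ℝ} (hf : 𝓛 f) : 𝓛 |f| := by
  have h1 := memL_sup hI hf (memL_neg hI hf)
  have e : f ⊔ (-f) = |f| := funext fun z => by
    simp only [Pi.sup_apply, Pi.neg_apply, Pi.abs_apply]
    exact (abs_eq_max_neg (a := f z)).symm
  rwa [e] at h1

end Core

/-- running maxima over the window `[n, n+m]`. -/
def smax (g : ℕ → Z → ℝ) (n : ℕ) : ℕ → Z → ℝ
  | 0 => g n
  | m + 1 => smax g n m ⊔ g (n + m + 1)

lemma smax_mono_m (g : ℕ → Z → ℝ) (n m : ℕ) : smax g n m ≤ smax g n (m + 1) :=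
  le_sup_left

lemma smax_le_of {g : ℕ → Z → ℝ} {n : ℕ} {z : Z} {b : ℝ}
    (hb : ∀ k, n ≤ k → g k z ≤ b) : ∀ m, smax g n m z ≤ b := by
  intro m
  induction m with
  | zero => exact hb n le_rfl
  | succ m ih =>
      show max (smax g n m z) (g (n + m + 1) z) ≤ b
      exact max_le ih (hb _ (by omega))

lemma le_smax (g : ℕ → Z → ℝ) (n m : ℕ) (z : Z) : g n z ≤ smax g n m z := by
  induction m with
  | zero => exact le_rfl
  | succ m ih => exact le_trans ih (le_max_left _ _)

lemma smax_shift (g : ℕ → Z → ℝ) (n m : ℕ) (z : Z) :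
    smax g (n + 1) m z ≤ smax g n (m + 1) z := by
  induction m with
  | zero =>
      show g (n + 1) z ≤ max (smax g n 0 z) (g (n + 0 + 1) z)
      exact le_max_right _ _
  | succ m ih =>
      show max (smax g (n + 1) m z) (g (n + 1 + m + 1) z) ≤
        max (smax g n (m + 1) z) (g (n + (m + 1) + 1) z)
      have e : n + 1 + m + 1 = n + (m + 1) + 1 := by omega
      rw [e]
      exact max_le_max ih le_rfl

section Core2
variable {R : Set (Z → ℝ)} {I : (Z → ℝ) → ℝ} (hI : IsDaniell R I)
include hI

local notation "𝓛" => Memℒ R I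
local notation "Ib" => IbarDef R I

lemma memL_smax {g : ℕ → Z → ℝ} (hg : ∀ k, 𝓛 (g k)) (n m : ℕ) : 𝓛 (smax g n m) := by
  induction m with
  | zero => exact hg n
  | succ m ih => exact memL_sup hI ih (hg (n + m + 1))

lemma memL_pdom : Pdom {f | Memℒ R I f} ⊆ {f | Memℒ R I f} := by
  rintro φ ⟨F, hFmem, hFdom, hFlim⟩
  set G := F 0 with hG
  set g : ℕ → Z → ℝ := fun k => F (k + 1) with hg
  have hgL : ∀ k, 𝓛 (g k) := fun k => hFmem (k + 1)
  have hGL : 𝓛 G := hFmem 0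
  have hgG : ∀ k z, |g k z| ≤ G z := fun k z => by
    have := hFdom k z
    simpa [Pi.abs_apply] using this
  have hbddz : ∀ n z, BddAbove (Set.range fun m => smax g n m z) := by
    intro n z
    refine ⟨G z, ?_⟩
    rintro x ⟨m, rfl⟩
    exact smax_le_of (fun k _ => (abs_le.mp (hgG k z)).2) m
  set s : ℕ → Z → ℝ := fun n z => ⨆ m, smax g n m z with hs
  have hstend : ∀ n z, Tendsto (fun m => smax g n m z) atTop (𝓝 (s n z)) := fun n z =>
    tendsto_atTop_ciSup (monotone_nat_of_le_succ (fun m => smax_mono_m g n m z)) (hbddz n z)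
  have hsmaxle : ∀ n m, smax g n m ≤ G := fun n m z =>
    smax_le_of (fun k _ => (abs_le.mp (hgG k z)).2) m
  have hsL : ∀ n, 𝓛 (s n) := by
    intro n
    exact (MCT hI (fun m => memL_smax hI hgL n m) (fun m => smax_mono_m g n m)
      (fun z => hstend n z)
      (B := Ib G)
      (fun m => ibar_mono hI (memL_smax hI hgL n m) hGL (hsmaxle n m))).1
  have hsge : ∀ n z, g n z ≤ s n z := fun n z =>
    le_trans (le_of_eq rfl) (le_ciSup (hbddz n z) 0)
  have hsdec : ∀ n, s (n + 1) ≤ s n := fun n z =>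
    ciSup_le (fun m => le_trans (smax_shift g n m z) (le_ciSup (hbddz n z) (m + 1)))
  have hstendφ : ∀ z, Tendsto (fun n => s n z) atTop (𝓝 (φ z)) := by
    intro z
    rw [Metric.tendsto_atTop]
    intro ε hε
    obtain ⟨N, hN⟩ := Metric.tendsto_atTop.mp (hFlim z) (ε / 2) (by linarith)
    refine ⟨N, fun n hn => ?_⟩
    have hub : s n z ≤ φ z + ε / 2 := by
      refine ciSup_le (fun m => smax_le_of (fun k hk => ?_) m)
      have := hN (k + 1) (by omega)
      rw [Real.dist_eq] at this
      have := abs_lt.mp this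
      have : F (k + 1) z ≤ φ z + ε / 2 := by linarith [this.2]
      simpa [hg] using this
    have hlb : φ z - ε / 2 ≤ s n z := by
      have h1 := hN (n + 1) (by omega)
      rw [Real.dist_eq] at h1
      have h2 := abs_lt.mp h1
      have h3 : φ z - ε / 2 ≤ g n z := by
        simp only [hg]
        linarith [h2.1]
      linarith [hsge n z]
    rw [Real.dist_eq, abs_lt]
    constructor <;> [linarith; linarith]
  have hmct := MCT hI (f := fun n => -(s n)) (F := -φ)
    (fun n => memL_neg hI (hsL n))
    (fun n z => by
      simp only [Pi.neg_apply, neg_le_neg_iff]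
      exact hsdec n z)
    (fun z => by
      simp only [Pi.neg_apply]
      exact (hstendφ z).neg)
    (B := Ib G)
    (fun n => ibar_mono hI (memL_neg hI (hsL n)) hGL (fun z => by
      simp only [Pi.neg_apply]
      have h1 := (abs_le.mp (hgG n z)).1
      have := hsge n z
      simp only [hG] at *
      linarith))
  have := memL_neg hI hmct.1
  rwa [neg_neg] at this

end Core2

lemma isLebesgue_LGen (M : Set (Z → ℝ)) : IsLebesgue (LGen M) := by
  refine ⟨⟨⟨?_, ?_, ?_⟩, ?_⟩, ?_⟩
  · exact Set.mem_sInter.mpr (fun L hL => hL.1.1.1.1)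
  · intro f g hf hg
    exact Set.mem_sInter.mpr (fun L hL =>
      hL.1.1.1.2.1 f g (Set.mem_sInter.mp hf L hL) (Set.mem_sInter.mp hg L hL))
  · intro c f hf
    exact Set.mem_sInter.mpr (fun L hL => hL.1.1.1.2.2 c f (Set.mem_sInter.mp hf L hL))
  · intro f hf
    exact Set.mem_sInter.mpr (fun L hL => hL.1.1.2 f (Set.mem_sInter.mp hf L hL))
  · rintro f ⟨F, h1, h2, h3⟩
    exact Set.mem_sInter.mpr (fun L hL =>
      hL.1.2 ⟨F, fun n => Set.mem_sInter.mp (h1 n) L hL, h2, h3⟩)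

lemma subset_LGen (M : Set (Z → ℝ)) : M ⊆ LGen M :=
  fun _ hf => Set.mem_sInter.mpr (fun _ hL => hL.2 hf)

lemma LGen_subset {M L : Set (Z → ℝ)} (hL : IsLebesgue L) (hML : M ⊆ L) : LGen M ⊆ L :=
  Set.sInter_subset_of_mem ⟨hL, hML⟩

end Stmt12

open Stmt12

theorem stmt12 {Z : Type*} (R : Set (Z → ℝ)) (I : (Z → ℝ) → ℝ)
    (hI : IsDaniell R I) :
    ∃ Ibar : (Z → ℝ) → ℝ, IsDaniell (LGen R) Ibar ∧
      (∀ f ∈ R, Ibar f = I f) ∧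
      ∀ I' : (Z → ℝ) → ℝ, IsDaniell (LGen R) I' → (∀ f ∈ R, I' f = I f) →
        ∀ f ∈ LGen R, I' f = Ibar f := by
  classical
  have hLG : IsLebesgue (LGen R) := isLebesgue_LGen R
  have hsub : R ⊆ LGen R := subset_LGen R
  have hLone : IsLebesgue {f | Memℒ R I f} := by
    refine ⟨⟨⟨memL_of_mem hI hI.1.1.1, fun f g hf hg => memL_add hI hf hg,
      fun c f hf => memL_smul hI hf c⟩, fun f hf => memL_abs hI hf⟩, memL_pdom hI⟩
  have hsubL : LGen R ⊆ {f | Memℒ R I f} :=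
    LGen_subset hLone (fun f hf => memL_of_mem hI hf)
  refine ⟨IbarDef R I, ⟨hLG.1, ?_, ?_, ?_, ?_⟩, fun f hf => ibar_eq_of_mem hI hf, ?_⟩
  · -- additivity
    intro f g hf hg
    exact ibar_add hI (hsubL hf) (hsubL hg)
  · -- homogeneity
    intro c f hf
    exact ibar_smul hI (hsubL hf) c
  · -- |·| bound
    intro f hf
    exact ibar_mono hI (hsubL hf) (hsubL (hLG.1.2 f hf))
      (fun z => by simpa [Pi.abs_apply] using le_abs_self (f z))
  · -- continuity
    intro F hFmem hFpos hFdec hFlim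
    set u : ℕ → Z → ℝ := fun n => F 0 - F (n + 1) with hu
    have huL : ∀ n, Memℒ R I (u n) := by
      intro n
      have := memL_add hI (hsubL (hFmem 0)) (memL_neg hI (hsubL (hFmem (n + 1))))
      rwa [← sub_eq_add_neg] at this
    have humono : ∀ n, u n ≤ u (n + 1) := fun n z => by
      have := hFdec (n + 1) z
      simp only [hu, Pi.sub_apply]
      linarith
    have hulim : ∀ z, Tendsto (fun n => u n z) atTop (𝓝 (F 0 z)) := by
      intro z
      have h1 : Tendsto (fun n => F (n + 1) z) atTop (𝓝 0) :=
        (hFlim z).comp (tendsto_add_atTop_nat 1)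
      have := (tendsto_const_nhds (x := F 0 z) (f := atTop (α := ℕ))).sub h1
      simpa [hu] using this
    have hub : ∀ n, IbarDef R I (u n) ≤ IbarDef R I (F 0) := by
      intro n
      refine ibar_mono hI (huL n) (hsubL (hFmem 0)) (fun z => ?_)
      have := hFpos n z
      simp only [hu, Pi.sub_apply]
      simp only [Pi.zero_apply] at this
      linarith
    have hmct := MCT hI huL humono hulim hub
    have heq : ∀ n, IbarDef R I (u n) = IbarDef R I (F 0) - IbarDef R I (F (n + 1)) := by
      intro n
      have e : u n = F 0 + -(F (n + 1)) := by
        funext z; simp [hu, sub_eq_add_neg]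
      rw [e, ibar_add hI (hsubL (hFmem 0)) (memL_neg hI (hsubL (hFmem (n + 1)))),
        ibar_neg hI (hsubL (hFmem (n + 1)))]
      ring
    have h2 : Tendsto (fun n => IbarDef R I (F (n + 1))) atTop (𝓝 0) := by
      have h3 := (tendsto_const_nhds (x := IbarDef R I (F 0)) (f := atTop (α := ℕ))).sub hmct.2
      have e : (fun n => IbarDef R I (F 0) - IbarDef R I (u n)) =
          fun n => IbarDef R I (F (n + 1)) := by
        funext n
        rw [heq n]
        ring
      rw [e] at h3
      simpa using h3
    exact (tendsto_add_atTop_iff_nat 1).mp h2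
  · -- uniqueness
    intro I' hI' hagr f hf
    have step : ∀ g ∈ LGen R, ∀ c, Adm R I g c → I' g ≤ c := by
      rintro g hg c ⟨h, hmem, hm, hdom, hc⟩
      have hc' : Tendsto (fun n => I' (h n)) atTop (𝓝 c) := by
        have e : (fun n => I' (h n)) = fun n => I (h n) :=
          funext fun n => hagr _ (hmem n)
        rw [e]; exact hc
      exact keyB hI' (fun n => hsub (hmem n)) hm hg hdom hc'
    have hfL : Memℒ R I f := hsubL hf
    have key : ∀ ε > 0, |I' f - IbarDef R I f| ≤ ε := by
      intro ε hε
      obtain ⟨c, d, hc, hd, hcd⟩ := hfL ε hε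
      have h1 : I' f ≤ c := step f hf c hc
      have h2 : I' (-f) ≤ d := step (-f) (riesz_neg_mem hLG.1 hf) d hd
      rw [daniell_neg hI' hf] at h2
      have h3 : IbarDef R I f ≤ c := ibar_le hI hfL hc
      have h4 : -d ≤ IbarDef R I f := ibar_ge hI hfL hd
      rw [abs_le]
      constructor <;> linarith
    have h0 : |I' f - IbarDef R I f| ≤ 0 := by
      refine le_of_forall_pos_le_add (fun ε hε => ?_)
      have := key ε hε
      linarith
    have := abs_eq_zero.mp (le_antisymm h0 (abs_nonneg _))
    linarith
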